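/- Let w₋ < w_m, w̃ := w_m − w₋, and let w(t,x) be the global smooth solution of the Burgers equation ∂_t w + w ∂_x w = 0 with initial data w₀(x) = (w_m + w₋)/2 + ((w_m − w₋)/2)·tanh x, defined by the characteristics w(t,x) = w₀(x₀(t,x)) with x = x₀(t,x) + t·w₀(x₀(t,x)). Then there exists a constant C > 0 such that: (a) for all t ≥ 0 and x ≥ w_m t, |w(t,x) − w_m| ≤ w̃ e^{−2|x − w_m t|} and |∂_x w(t,x)| + |∂_x² w(t,x)| ≤ C w̃ e^{−2|x − w_m t|}; (b) for all t ≥ 0 and x ≤ w₋ t, |w(t,x) − w₋| ≤ w̃ e^{−2|x − w₋ t|} and |∂_x w(t,x)| + |∂_x² w(t,x)| ≤ C w̃ e^{−2|x − w₋ t|}. -/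

import Mathlib

/-- Smoothed Riemann data for the Burgers equation:
`w₀(x) = (w_m + w₋)/2 + ((w_m - w₋)/2) tanh x`. -/
noncomputable def burgersInit (wminus wm : ℝ) : ℝ → ℝ :=
  fun x => (wm + wminus) / 2 + (wm - wminus) / 2 * Real.tanh x

section BurgersAux

/-- `sech² y`, written via `tanh`. -/
noncomputable def sech2 (y : ℝ) : ℝ := 1 - Real.tanh y ^ 2

lemma myHasDerivAt_tanh (y : ℝ) : HasDerivAt Real.tanh (sech2 y) y := by
  have hc : Real.cosh y ≠ 0 := (Real.cosh_pos y).ne'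
  have h := (Real.hasDerivAt_sinh y).div (Real.hasDerivAt_cosh y) hc
  have he : Real.tanh = fun z => Real.sinh z / Real.cosh z :=
    funext fun z => Real.tanh_eq_sinh_div_cosh z
  rw [sech2, he]
  refine h.congr_deriv ?_
  field_simp

lemma sech2_eq (y : ℝ) : sech2 y = (Real.cosh y ^ 2)⁻¹ := by
  have hc : Real.cosh y ≠ 0 := (Real.cosh_pos y).ne'
  rw [sech2, Real.tanh_eq_sinh_div_cosh]
  field_simp
  linarith [Real.cosh_sq_sub_sinh_sq y]

lemma sech2_pos (y : ℝ) : 0 < sech2 y := by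
  rw [sech2_eq]; positivity

lemma sech2_le_one (y : ℝ) : sech2 y ≤ 1 := by
  rw [sech2]; nlinarith [sq_nonneg (Real.tanh y)]

lemma tanh_le_one' (y : ℝ) : Real.tanh y ≤ 1 := by
  have h := sech2_pos y
  rw [sech2] at h
  nlinarith

lemma neg_one_le_tanh (y : ℝ) : -1 ≤ Real.tanh y := by
  have h := sech2_pos y
  rw [sech2] at h
  nlinarith

lemma abs_tanh_le_one (y : ℝ) : |Real.tanh y| ≤ 1 := by
  have h := sech2_pos y; rw [sech2] at h
  rw [abs_le]; constructor <;> nlinarith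

lemma exp_abs_le_cosh (y : ℝ) : Real.exp |y| / 2 ≤ Real.cosh y := by
  rw [Real.cosh_eq]
  rcases abs_cases y with ⟨h1, _⟩ | ⟨h1, _⟩ <;> rw [h1]
  · linarith [Real.exp_pos (-y)]
  · linarith [Real.exp_pos y]

lemma sech2_le (y : ℝ) : sech2 y ≤ 4 * Real.exp (-(2 * |y|)) := by
  rw [sech2_eq, Real.exp_neg]
  have hc := Real.cosh_pos y
  have he : Real.exp (2 * |y|) = Real.exp |y| * Real.exp |y| := by
    rw [← Real.exp_add]; ring_nf
  have h1 := exp_abs_le_cosh y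
  rw [inv_eq_one_div, inv_eq_one_div, ← mul_div_assoc, mul_one,
    div_le_div_iff₀ (by positivity) (Real.exp_pos _)]
  nlinarith [Real.exp_pos |y|]

lemma one_sub_tanh_eq (y : ℝ) : 1 - Real.tanh y = Real.exp (-y) / Real.cosh y := by
  have hc : Real.cosh y ≠ 0 := (Real.cosh_pos y).ne'
  rw [Real.tanh_eq_sinh_div_cosh, eq_div_iff hc, sub_mul, one_mul, div_mul_cancel₀ _ hc]
  linarith [Real.cosh_sub_sinh y]

lemma one_sub_tanh_le (y : ℝ) : 1 - Real.tanh y ≤ 2 * Real.exp (-(2 * y)) := by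
  rw [one_sub_tanh_eq, div_le_iff₀ (Real.cosh_pos y), Real.cosh_eq]
  have h1 : Real.exp (-(2 * y)) * Real.exp y = Real.exp (-y) := by
    rw [← Real.exp_add]; ring_nf
  nlinarith [mul_pos (Real.exp_pos (-(2 * y))) (Real.exp_pos (-y))]

lemma one_add_tanh_le (y : ℝ) : 1 + Real.tanh y ≤ 2 * Real.exp (2 * y) := by
  have h := one_sub_tanh_le (-y)
  rw [Real.tanh_neg] at h
  have h2 : Real.exp (-(2 * -y)) = Real.exp (2 * y) := by ring_nf
  rw [h2] at h
  linarith

/-- Master lemma: derivative bounds for the composed solution along characteristics. -/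
lemma burgers_master (a b t : ℝ) (hb : 0 < b) (ht : 0 ≤ t) (g : ℝ → ℝ)
    (hg : ∀ x, g x + t * (a + b * Real.tanh (g x)) = x) (x : ℝ) :
    |deriv (fun y => a + b * Real.tanh (g y)) x|
      + |iteratedDeriv 2 (fun y => a + b * Real.tanh (g y)) x|
      ≤ 3 * b * sech2 (g x) := by
  have hD1 : ∀ y : ℝ, 1 ≤ 1 + t * (b * sech2 y) := fun y => by
    nlinarith [mul_nonneg ht (mul_nonneg hb.le (sech2_pos y).le)]
  have hDpos : ∀ y : ℝ, 0 < 1 + t * (b * sech2 y) := fun y => lt_of_lt_of_le one_pos (hD1 y)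
  have hDne : ∀ y : ℝ, 1 + t * (b * sech2 y) ≠ 0 := fun y => (hDpos y).ne'
  have hS : ∀ y : ℝ, HasDerivAt sech2 (-(2 * Real.tanh y * sech2 y)) y := by
    intro y
    have h1 : HasDerivAt (fun z => 1 - Real.tanh z ^ 2)
        (-((2 : ℕ) * Real.tanh y ^ (2 - 1) * sech2 y)) y :=
      ((myHasDerivAt_tanh y).pow 2).const_sub 1
    have h2 : sech2 = fun z => 1 - Real.tanh z ^ 2 := funext fun z => rfl
    rw [h2]
    convert h1 using 1
    simp only [sech2]
    push_cast; ring
  have hw : ∀ y : ℝ, HasDerivAt (fun z => a + b * Real.tanh z) (b * sech2 y) y := fun y =>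
    ((myHasDerivAt_tanh y).const_mul b).const_add a
  have hF : ∀ y : ℝ, HasDerivAt (fun z => z + t * (a + b * Real.tanh z))
      (1 + t * (b * sech2 y)) y := fun y => (hasDerivAt_id y).add ((hw y).const_mul t)
  have hmono : StrictMono (fun z => z + t * (a + b * Real.tanh z)) :=
    strictMono_of_hasDerivAt_pos hF hDpos
  have hsurj : Function.Surjective (fun z => z + t * (a + b * Real.tanh z)) := fun z => ⟨g z, hg z⟩
  set e := StrictMono.orderIsoOfSurjective _ hmono hsurj with he
  have hge : g = ⇑e.symm := by
    funext z
    exact hmono.injective ((hg z).trans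
      (StrictMono.orderIsoOfSurjective_self_symm_apply _ hmono hsurj z).symm)
  have hgc : Continuous g := by rw [hge]; exact e.symm.continuous
  have hgd : ∀ z : ℝ, HasDerivAt g (1 + t * (b * sech2 (g z)))⁻¹ z := fun z =>
    HasDerivAt.of_local_left_inverse hgc.continuousAt (hF (g z)) (hDne (g z))
      (Filter.Eventually.of_forall hg)
  have hfd : ∀ z : ℝ, HasDerivAt (fun y => a + b * Real.tanh (g y))
      (b * sech2 (g z) * (1 + t * (b * sech2 (g z)))⁻¹) z := fun z =>
    (hw (g z)).comp z (hgd z)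
  have hderiv : deriv (fun y => a + b * Real.tanh (g y))
      = fun z => b * sech2 (g z) * (1 + t * (b * sech2 (g z)))⁻¹ :=
    funext fun z => (hfd z).deriv
  have hφ : ∀ u : ℝ, HasDerivAt (fun u => b * sech2 u * (1 + t * (b * sech2 u))⁻¹)
      (b * -(2 * Real.tanh u * sech2 u) / (1 + t * (b * sech2 u)) ^ 2) u := by
    intro u
    have h1 : HasDerivAt (fun u => b * sech2 u) (b * -(2 * Real.tanh u * sech2 u)) u :=
      (hS u).const_mul b
    have h2 : HasDerivAt (fun u => 1 + t * (b * sech2 u))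
        (t * (b * -(2 * Real.tanh u * sech2 u))) u :=
      (((hS u).const_mul b).const_mul t).const_add 1
    have h3 := h1.div h2 (hDne u)
    have h4 : ∀ z : ℝ, b * sech2 z * (1 + t * (b * sech2 z))⁻¹
        = b * sech2 z / (1 + t * (b * sech2 z)) := fun z => by rw [div_eq_mul_inv]
    simp only [h4]
    refine h3.congr_deriv ?_
    rw [div_eq_div_iff (pow_ne_zero 2 (hDne u)) (pow_ne_zero 2 (hDne u))]
    ring
  have hd2 : HasDerivAt (deriv (fun y => a + b * Real.tanh (g y)))
      (b * -(2 * Real.tanh (g x) * sech2 (g x)) / (1 + t * (b * sech2 (g x))) ^ 2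
        * (1 + t * (b * sech2 (g x)))⁻¹) x := by
    rw [hderiv]
    exact (hφ (g x)).comp x (hgd x)
  have h2eq : iteratedDeriv 2 (fun y => a + b * Real.tanh (g y)) x
      = b * -(2 * Real.tanh (g x) * sech2 (g x)) / (1 + t * (b * sech2 (g x))) ^ 2
        * (1 + t * (b * sech2 (g x)))⁻¹ := by
    rw [iteratedDeriv_succ, iteratedDeriv_one]
    exact hd2.deriv
  have hc := sech2_pos (g x)
  have hd := hD1 (g x)
  have hdinv : (1 + t * (b * sech2 (g x)))⁻¹ ≤ 1 := inv_le_one_of_one_le₀ hd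
  have hdinvpos : 0 < (1 + t * (b * sech2 (g x)))⁻¹ := inv_pos.2 (hDpos (g x))
  have hB1 : |deriv (fun y => a + b * Real.tanh (g y)) x| ≤ b * sech2 (g x) := by
    rw [(hfd x).deriv, abs_of_nonneg (by positivity)]
    nlinarith [mul_nonneg hb.le hc.le]
  have hB2 : |iteratedDeriv 2 (fun y => a + b * Real.tanh (g y)) x| ≤ 2 * b * sech2 (g x) := by
    rw [h2eq, abs_mul, abs_div, abs_mul, abs_neg, abs_mul, abs_mul,
      abs_of_nonneg hb.le, abs_of_nonneg hc.le, abs_of_nonneg (by norm_num : (0:ℝ) ≤ 2),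
      abs_of_nonneg (by positivity : (0:ℝ) ≤ (1 + t * (b * sech2 (g x))) ^ 2),
      abs_of_nonneg hdinvpos.le, div_eq_mul_inv]
    have hd2inv : ((1 + t * (b * sech2 (g x))) ^ 2)⁻¹ ≤ 1 :=
      inv_le_one_of_one_le₀ (one_le_pow₀ hd)
    have htb := abs_tanh_le_one (g x)
    calc b * (2 * |Real.tanh (g x)| * sech2 (g x)) * ((1 + t * (b * sech2 (g x))) ^ 2)⁻¹
          * (1 + t * (b * sech2 (g x)))⁻¹
        ≤ b * (2 * 1 * sech2 (g x)) * 1 * 1 := by gcongr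
      _ = 2 * b * sech2 (g x) := by ring
  linarith

end BurgersAux

/-- Exponential decay of the approximate rarefaction wave outside the fan:
with `w(t,x) = w₀(X₀(t,x))` given by characteristics and `w̃ = w_m - w₋`, there is
`C > 0` such that for `x ≥ w_m t`: `|w - w_m| ≤ w̃ e^(-2|x - w_m t|)` and
`|∂ₓw| + |∂ₓ²w| ≤ C w̃ e^(-2|x - w_m t|)`; and symmetrically for `x ≤ w₋ t`. -/
theorem stmt_12 (wminus wm : ℝ) (h : wminus < wm)
    (X₀ : ℝ → ℝ → ℝ)
    (hX : ∀ t : ℝ, 0 ≤ t → ∀ x : ℝ, X₀ t x + t * burgersInit wminus wm (X₀ t x) = x) :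
    ∃ C > (0 : ℝ),
      (∀ t : ℝ, 0 ≤ t → ∀ x : ℝ, wm * t ≤ x →
        |burgersInit wminus wm (X₀ t x) - wm|
            ≤ (wm - wminus) * Real.exp (-2 * |x - wm * t|) ∧
        |deriv (fun y => burgersInit wminus wm (X₀ t y)) x|
            + |iteratedDeriv 2 (fun y => burgersInit wminus wm (X₀ t y)) x|
          ≤ C * (wm - wminus) * Real.exp (-2 * |x - wm * t|)) ∧
      (∀ t : ℝ, 0 ≤ t → ∀ x : ℝ, x ≤ wminus * t →
        |burgersInit wminus wm (X₀ t x) - wminus|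
            ≤ (wm - wminus) * Real.exp (-2 * |x - wminus * t|) ∧
        |deriv (fun y => burgersInit wminus wm (X₀ t y)) x|
            + |iteratedDeriv 2 (fun y => burgersInit wminus wm (X₀ t y)) x|
          ≤ C * (wm - wminus) * Real.exp (-2 * |x - wminus * t|)) := by
  have hb : 0 < (wm - wminus) / 2 := by linarith
  refine ⟨6, by norm_num, ?_, ?_⟩
  · -- right side: x ≥ wm t
    intro t ht x hx
    have hg : ∀ z, X₀ t z + t * ((wm + wminus) / 2
        + (wm - wminus) / 2 * Real.tanh (X₀ t z)) = z := hX t ht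
    have hweq : burgersInit wminus wm (X₀ t x)
        = (wm + wminus) / 2 + (wm - wminus) / 2 * Real.tanh (X₀ t x) := rfl
    have hwle : burgersInit wminus wm (X₀ t x) ≤ wm := by
      rw [hweq]; nlinarith [tanh_le_one' (X₀ t x)]
    have hgx : X₀ t x = x - t * burgersInit wminus wm (X₀ t x) := by
      have := hX t ht x; linarith
    have hpos : 0 ≤ x - wm * t := by linarith
    have hXpos : x - wm * t ≤ X₀ t x := by
      have h1 : t * burgersInit wminus wm (X₀ t x) ≤ t * wm :=
        mul_le_mul_of_nonneg_left hwle ht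
      rw [hgx]; linarith
    have habs : |x - wm * t| = x - wm * t := abs_of_nonneg hpos
    have hexp : Real.exp (-(2 * X₀ t x)) ≤ Real.exp (-2 * |x - wm * t|) := by
      rw [habs]; exact Real.exp_le_exp.2 (by linarith)
    constructor
    · have h1 : |burgersInit wminus wm (X₀ t x) - wm|
          = (wm - wminus) / 2 * (1 - Real.tanh (X₀ t x)) := by
        rw [hweq, abs_of_nonpos (by nlinarith [tanh_le_one' (X₀ t x)])]; ring
      rw [h1]
      calc (wm - wminus) / 2 * (1 - Real.tanh (X₀ t x))
          ≤ (wm - wminus) / 2 * (2 * Real.exp (-(2 * X₀ t x))) := by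
            nlinarith [one_sub_tanh_le (X₀ t x)]
        _ ≤ (wm - wminus) * Real.exp (-2 * |x - wm * t|) := by
            nlinarith [Real.exp_pos (-(2 * X₀ t x))]
    · have hfe : (fun y => burgersInit wminus wm (X₀ t y))
          = fun y => (wm + wminus) / 2 + (wm - wminus) / 2 * Real.tanh (X₀ t y) := rfl
      rw [hfe]
      have hm := burgers_master ((wm + wminus) / 2) ((wm - wminus) / 2) t hb ht (X₀ t) hg x
      have h5 : Real.exp (-(2 * |X₀ t x|)) ≤ Real.exp (-2 * |x - wm * t|) := by
        rw [habs]
        exact Real.exp_le_exp.2 (by nlinarith [le_abs_self (X₀ t x)])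
      calc |deriv (fun y => (wm + wminus) / 2 + (wm - wminus) / 2 * Real.tanh (X₀ t y)) x|
            + |iteratedDeriv 2
                (fun y => (wm + wminus) / 2 + (wm - wminus) / 2 * Real.tanh (X₀ t y)) x|
          ≤ 3 * ((wm - wminus) / 2) * sech2 (X₀ t x) := hm
        _ ≤ 3 * ((wm - wminus) / 2) * (4 * Real.exp (-(2 * |X₀ t x|))) := by
            nlinarith [sech2_le (X₀ t x)]
        _ ≤ 6 * (wm - wminus) * Real.exp (-2 * |x - wm * t|) := by
            nlinarith [Real.exp_pos (-(2 * |X₀ t x|)), h5]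
  · -- left side: x ≤ wminus t
    intro t ht x hx
    have hg : ∀ z, X₀ t z + t * ((wm + wminus) / 2
        + (wm - wminus) / 2 * Real.tanh (X₀ t z)) = z := hX t ht
    have hweq : burgersInit wminus wm (X₀ t x)
        = (wm + wminus) / 2 + (wm - wminus) / 2 * Real.tanh (X₀ t x) := rfl
    have hwge : wminus ≤ burgersInit wminus wm (X₀ t x) := by
      rw [hweq]; nlinarith [neg_one_le_tanh (X₀ t x)]
    have hgx : X₀ t x = x - t * burgersInit wminus wm (X₀ t x) := by
      have := hX t ht x; linarith
    have hneg : x - wminus * t ≤ 0 := by linarith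
    have hXneg : X₀ t x ≤ x - wminus * t := by
      have h1 : t * wminus ≤ t * burgersInit wminus wm (X₀ t x) :=
        mul_le_mul_of_nonneg_left hwge ht
      rw [hgx]; linarith
    have habs : |x - wminus * t| = -(x - wminus * t) := abs_of_nonpos hneg
    have hexp : Real.exp (2 * X₀ t x) ≤ Real.exp (-2 * |x - wminus * t|) := by
      rw [habs]; exact Real.exp_le_exp.2 (by linarith)
    constructor
    · have h1 : |burgersInit wminus wm (X₀ t x) - wminus|
          = (wm - wminus) / 2 * (1 + Real.tanh (X₀ t x)) := by
        rw [hweq, abs_of_nonneg (by nlinarith [neg_one_le_tanh (X₀ t x)])]; ring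
      rw [h1]
      calc (wm - wminus) / 2 * (1 + Real.tanh (X₀ t x))
          ≤ (wm - wminus) / 2 * (2 * Real.exp (2 * X₀ t x)) := by
            nlinarith [one_add_tanh_le (X₀ t x)]
        _ ≤ (wm - wminus) * Real.exp (-2 * |x - wminus * t|) := by
            nlinarith [Real.exp_pos (2 * X₀ t x)]
    · have hfe : (fun y => burgersInit wminus wm (X₀ t y))
          = fun y => (wm + wminus) / 2 + (wm - wminus) / 2 * Real.tanh (X₀ t y) := rfl
      rw [hfe]
      have hm := burgers_master ((wm + wminus) / 2) ((wm - wminus) / 2) t hb ht (X₀ t) hg x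
      have h5 : Real.exp (-(2 * |X₀ t x|)) ≤ Real.exp (-2 * |x - wminus * t|) := by
        rw [habs]
        exact Real.exp_le_exp.2 (by nlinarith [neg_abs_le (X₀ t x)])
      calc |deriv (fun y => (wm + wminus) / 2 + (wm - wminus) / 2 * Real.tanh (X₀ t y)) x|
            + |iteratedDeriv 2
                (fun y => (wm + wminus) / 2 + (wm - wminus) / 2 * Real.tanh (X₀ t y)) x|
          ≤ 3 * ((wm - wminus) / 2) * sech2 (X₀ t x) := hm
        _ ≤ 3 * ((wm - wminus) / 2) * (4 * Real.exp (-(2 * |X₀ t x|))) := by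
            nlinarith [sech2_le (X₀ t x)]
        _ ≤ 6 * (wm - wminus) * Real.exp (-2 * |x - wminus * t|) := by
            nlinarith [Real.exp_pos (-(2 * |X₀ t x|)), h5]
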